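/- arXiv:2510.04310 — 4 statements merged into one kernel-verified Lean document; each statement's English description precedes it below -/
import Mathlib

section
/- Let n and f be natural numbers with n > 3f, let ι and V be types, let I be a finset of ι with |I| = n − f, and let g : ι → V be a value assignment. If v and w are values such that the number of i ∈ I with g i = v is at least |I| − f and the number of i ∈ I with g i = w is at least |I| − f, then v = w. -/
namespace Finset

variable {ι V : Type*} [DecidableEq V]

theorem eq_of_card_lt_card_filter_eq_add_card_filter_eq (s : Finset ι) (g : ι → V) {v w : V}
    (h : s.card < (s.filter (g · = v)).card + (s.filter (g · = w)).card) : v = w := by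
  classical
  by_contra hvw
  have hdisj : Disjoint (s.filter (g · = v)) (s.filter (g · = w)) :=
    disjoint_filter.2 fun _ _ hv hw => hvw (hv ▸ hw)
  have hle := card_le_card (union_subset (filter_subset (g · = v) s) (filter_subset (g · = w) s))
  rw [card_union_of_disjoint hdisj] at hle
  omega

end Finset

theorem unique_majority_value {n f : ℕ} (hnf : n > 3 * f)
    {ι V : Type*} [DecidableEq V]
    (I : Finset ι) (hI : I.card = n - f) (g : ι → V) (v w : V)
    (hv : I.card - f ≤ (I.filter (fun i => g i = v)).card)
    (hw : I.card - f ≤ (I.filter (fun i => g i = w)).card) :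
    v = w := by
  refine I.eq_of_card_lt_card_filter_eq_add_card_filter_eq g ?_
  -- `#I = n - f > 2f`, so two fibres of size at least `#I - f` cannot both fit in `I`.
  omega
end

section
/- Let n and f be natural numbers with n > 3f, let ι and V be types, let I, A, B be finsets of ι with I ⊆ A, I ⊆ B, and |I| = n − f, and let g : ι → V be a value assignment. If v and w are values such that the number of i ∈ A with g i = v is at least |A| − f and the number of i ∈ B with g i = w is at least |B| − f, then v = w. -/
/-! A value decided from `A` is carried by all but at most `f` members of `A`, hence of the
common core `I ⊆ A`; the same holds for the value decided from `B`. Since `|I| = n - f > 2 f`,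
some member of `I` carries both values, so they coincide. -/

namespace Finset

variable {ι : Type*} {s : Finset ι} {p q : ι → Prop} [DecidablePred p] [DecidablePred q] {f : ℕ}

theorem card_filter_not_le_of_card_sub_le (h : s.card - f ≤ (s.filter p).card) :
    (s.filter (fun i => ¬ p i)).card ≤ f := by
  have := card_filter_add_card_filter_not (s := s) p
  omega

theorem card_filter_not_le_of_subset {t : Finset ι} (hts : t ⊆ s)
    (h : (s.filter (fun i => ¬ p i)).card ≤ f) : (t.filter (fun i => ¬ p i)).card ≤ f :=
  (card_le_card (filter_subset_filter _ hts)).trans h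

theorem exists_mem_and_of_card_filter_not_le (hs : 2 * f < s.card)
    (hp : (s.filter (fun i => ¬ p i)).card ≤ f) (hq : (s.filter (fun i => ¬ q i)).card ≤ f) :
    ∃ i ∈ s, p i ∧ q i := by
  classical
  by_contra! hpq
  have hcover : s ⊆ s.filter (fun i => ¬ p i) ∪ s.filter (fun i => ¬ q i) := by
    intro i hi
    by_cases hpi : p i
    · exact mem_union_right _ (mem_filter.2 ⟨hi, hpq i hi hpi⟩)
    · exact mem_union_left _ (mem_filter.2 ⟨hi, hpi⟩)
  have := (card_le_card hcover).trans (card_union_le _ _)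
  omega

end Finset

open Finset in
theorem crusader_agreement_from_gather {n f : ℕ} (hnf : n > 3 * f)
    {ι V : Type*} [DecidableEq V]
    (I A B : Finset ι) (hIA : I ⊆ A) (hIB : I ⊆ B) (hI : I.card = n - f)
    (g : ι → V) (v w : V)
    (hv : A.card - f ≤ (A.filter (fun i => g i = v)).card)
    (hw : B.card - f ≤ (B.filter (fun i => g i = w)).card) :
    v = w := by
  have hIv := card_filter_not_le_of_subset hIA (card_filter_not_le_of_card_sub_le hv)
  have hIw := card_filter_not_le_of_subset hIB (card_filter_not_le_of_card_sub_le hw)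
  obtain ⟨i, -, hgv, hgw⟩ := exists_mem_and_of_card_filter_not_le (by omega) hIv hIw
  exact hgv.symm.trans hgw
end

section
/- Let n and f be natural numbers with n > 4f, let V be a type, let A and B be finsets of Fin n with |A| ≥ n − f and |B| ≥ n − f, and let g : Fin n → V be a value assignment. If v and w are values such that the number of i ∈ A with g i = v is at least |A| − f and the number of i ∈ B with g i = w is at least |B| − f, then v = w. -/
open Finset

theorem eq_of_card_lt_card_filter_add_card_filter {α V : Type*} [Fintype α] [DecidableEq α]
    [DecidableEq V] {g : α → V} {v w : V} (s t : Finset α)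
    (h : Fintype.card α < #(s.filter (g · = v)) + #(t.filter (g · = w))) : v = w := by
  obtain ⟨i, hi⟩ := inter_nonempty_of_card_lt_card_add_card (subset_univ _) (subset_univ _) h
  simp only [mem_inter, mem_filter] at hi
  exact hi.1.2.symm.trans hi.2.2

theorem crusader_agreement_from_rbcast {n f : ℕ} (hnf : n > 4 * f)
    {V : Type*} [DecidableEq V]
    (A B : Finset (Fin n)) (hA : n - f ≤ A.card) (hB : n - f ≤ B.card)
    (g : Fin n → V) (v w : V)
    (hv : A.card - f ≤ (A.filter (fun i => g i = v)).card)
    (hw : B.card - f ≤ (B.filter (fun i => g i = w)).card) :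
    v = w := by
  apply eq_of_card_lt_card_filter_add_card_filter (g := g) A B
  -- each filter has at least `n - 2f` elements, and `2 (n - 2f) > n` since `n > 4f`
  rw [Fintype.card_fin]
  omega
end

section
/- Let n and f be natural numbers with n > 3f, let V be a type, let F be a finset of Fin n with |F| ≤ f, let A be a finset of Fin n with |A| ≥ n − f, let g : Fin n → V, and let v : V be such that g i = v for every i ∈ A \ F. Then for any value w, if the number of i ∈ A with g i = w is at least |A| − f, then w = v. -/
theorem Finset.filter_apply_eq_subset_of_ne {ι V : Type*} [DecidableEq ι] [DecidableEq V]
    {A F : Finset ι} {g : ι → V} {v w : V} (hv : ∀ i ∈ A \ F, g i = v) (hwv : w ≠ v) :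
    A.filter (fun i => g i = w) ⊆ F := by
  intro i hi
  rw [Finset.mem_filter] at hi
  by_contra hiF
  exact hwv (hi.2 ▸ hv i (Finset.mem_sdiff.mpr ⟨hi.1, hiF⟩))

theorem validity_from_gather {n f : ℕ} (hnf : n > 3 * f)
    {V : Type*} [DecidableEq V]
    (F : Finset (Fin n)) (hF : F.card ≤ f)
    (A : Finset (Fin n)) (hA : n - f ≤ A.card)
    (g : Fin n → V) (v : V) (hv : ∀ i ∈ A \ F, g i = v) :
    ∀ w : V, A.card - f ≤ (A.filter (fun i => g i = w)).card → w = v := by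
  intro w hw
  by_contra hwv
  have hw_le_F := Finset.card_le_card (Finset.filter_apply_eq_subset_of_ne hv hwv)
  -- `|A| - f ≥ n - 2f > f ≥ |F|`
  omega
end
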